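/- arXiv:1311.7090 — 2 statements merged into one kernel-verified Lean document; each statement's English description precedes it below -/
import Mathlib

section
/- Let SP and SP' be specifications over Σ and Σ' respectively, σ : Σ → Σ' an injective signature morphism, and τ the translation induced by σ (τ(t ≈ t') = { σ(t) ≈ σ(t') }). If SP ⇝_σ SP', then SP ⇀_τ SP'. -/
open FirstOrder

/-- A single-sorted algebraic signature, i.e. a first-order language
(used with no relation symbols). -/
abbrev Signature : Type 1 := FirstOrder.Language.{0,0}

/-- An equation over a signature `L`: a pair of terms with variables in `ℕ`. -/
abbrev Eqn (L : Signature) : Type := L.Term ℕ × L.Term ℕ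

/-- A conditional equation: a finite set of premise equations and a conclusion equation. -/
abbrev CondEqn (L : Signature) : Type := Finset (Eqn L) × Eqn L

/-- An algebra for the signature `L`: a structure with nonempty carrier
(in a fixed universe). -/
structure Alg (L : Signature) : Type 1 where
  carrier : Type
  [str : L.Structure carrier]
  [nonempty : Nonempty carrier]

attribute [instance] Alg.str Alg.nonempty

/-- An assignment satisfies an equation. -/
def Alg.SatEq {L : Signature} (A : Alg L) (h : ℕ → A.carrier) (e : Eqn L) : Prop :=
  e.1.realize h = e.2.realize h

/-- An algebra satisfies a conditional equation. -/
def Alg.Sat {L : Signature} (A : Alg L) (ξ : CondEqn L) : Prop :=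
  ∀ h : ℕ → A.carrier, (∀ e ∈ ξ.1, A.SatEq h e) → A.SatEq h ξ.2

/-- A class of algebras satisfies a conditional equation. -/
def ClassSat {L : Signature} (K : Set (Alg L)) (ξ : CondEqn L) : Prop :=
  ∀ A ∈ K, A.Sat ξ

/-- The class of algebras denoted by a flat specification with axioms `Φ`. -/
def FlatMod {L : Signature} (Φ : Set (CondEqn L)) : Set (Alg L) :=
  {A | ∀ ξ ∈ Φ, A.Sat ξ}

/-- Extension of a translation on equations to conditional equations:
`τ⟨Γ, e⟩ = { ⟨⋃_{e₀ ∈ Γ} τ(e₀), e'⟩ : e' ∈ τ(e) }`. -/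
noncomputable def trCE {L L' : Signature} (τ : Eqn L → Finset (Eqn L'))
    (ξ : CondEqn L) : Finset (CondEqn L') :=
  letI := Classical.decEq (Eqn L')
  letI := Classical.decEq (CondEqn L')
  (τ ξ.2).image (fun e' => (ξ.1.biUnion τ, e'))

/-- `τ` interprets the specification (with model class `SP`) in the class `K`. -/
def InterpretsIn {L L' : Signature} (τ : Eqn L → Finset (Eqn L'))
    (SP : Set (Alg L)) (K : Set (Alg L')) : Prop :=
  ∀ ξ : CondEqn L, ClassSat SP ξ ↔ ∀ η ∈ trCE τ ξ, ClassSat K η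

/-- `τ` interprets the specification with model class `SP`. -/
def Interprets {L L' : Signature} (τ : Eqn L → Finset (Eqn L'))
    (SP : Set (Alg L)) : Prop :=
  ∃ K : Set (Alg L'), InterpretsIn τ SP K

/-- A `τ`-model of the specification with model class `SP`. -/
def IsTauModel {L L' : Signature} (τ : Eqn L → Finset (Eqn L'))
    (SP : Set (Alg L)) (A' : Alg L') : Prop :=
  ∀ ξ : CondEqn L, ClassSat SP ξ → ∀ η ∈ trCE τ ξ, A'.Sat η

/-- The class of all `τ`-models of `SP`. -/
def ModTau {L L' : Signature} (τ : Eqn L → Finset (Eqn L'))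
    (SP : Set (Alg L)) : Set (Alg L') :=
  {A' | IsTauModel τ SP A'}

/-- `SP'` refines `SP` by the interpretation `τ`. -/
def Refines {L L' : Signature} (τ : Eqn L → Finset (Eqn L'))
    (SP : Set (Alg L)) (SP' : Set (Alg L')) : Prop :=
  ∀ ξ : CondEqn L, ClassSat SP ξ → ∀ η ∈ trCE τ ξ, ClassSat SP' η

/-- Application of a substitution to an equation. -/
def substEq {L : Signature} (σ : ℕ → L.Term ℕ) (e : Eqn L) : Eqn L :=
  (e.1.subst σ, e.2.subst σ)

/-- The extension of a signature morphism (with variable map `v`) to terms. -/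
def mapTerm {L L' : Signature} (σ : L →ᴸ L') (v : ℕ → ℕ) : L.Term ℕ → L'.Term ℕ
  | .var x => .var (v x)
  | .func f ts => .func (σ.onFunction f) (fun i => mapTerm σ v (ts i))

/-- The extension of a signature morphism to equations. -/
def mapEq {L L' : Signature} (σ : L →ᴸ L') (v : ℕ → ℕ) (e : Eqn L) : Eqn L' :=
  (mapTerm σ v e.1, mapTerm σ v e.2)

/-- The extension of a signature morphism to conditional equations. -/
noncomputable def mapCE {L L' : Signature} (σ : L →ᴸ L') (v : ℕ → ℕ)
    (ξ : CondEqn L) : CondEqn L' :=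
  letI := Classical.decEq (Eqn L')
  (ξ.1.image (mapEq σ v), mapEq σ v ξ.2)

/-- The σ-reduct of an algebra along a signature morphism. -/
def Alg.reduct {L L' : Signature} (σ : L →ᴸ L') (A' : Alg L') : Alg L :=
  { carrier := A'.carrier, str := σ.reduct A'.carrier, nonempty := A'.nonempty }

/-- The composite of two translations on equations: `(ρ∘τ)(e) = ⋃_{e' ∈ τ(e)} ρ(e')`. -/
noncomputable def trCompEq {L L' L'' : Signature} (τ : Eqn L → Finset (Eqn L'))
    (ρ : Eqn L' → Finset (Eqn L'')) (e : Eqn L) : Finset (Eqn L'') :=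
  letI := Classical.decEq (Eqn L'')
  (τ e).biUnion ρ

/-! Translation along `σ` satisfies the satisfaction condition `A' ⊨ σ(ξ) ↔ A'↾σ ⊨ ξ`: terms
evaluate in `A'` under `h'` exactly as in the reduct under `h' ∘ v`, and every assignment of
the reduct has the form `h' ∘ v` because `v` is injective. Hence `SP ⇝_σ SP'` makes every model
of `SP'` satisfy `σ(ξ)` whenever `SP ⊨ ξ`. Since `σ` is injective on function symbols, every
`Σ`-algebra `A` expands to a `Σ'`-algebra whose reduct evaluates terms as `A` does, so `τ`
interprets `SP` in the class of expansions of its models. -/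

namespace Alg

variable {L L' : Signature} (σ : L →ᴸ L')

/-- Symbols outside the image of `σ` get an arbitrary constant value; relations play no role
in equational satisfaction. -/
noncomputable def extend (A : Alg L) : Alg L' where
  carrier := A.carrier
  str :=
    { funMap := fun {n} => Function.extend (σ.onFunction (n := n))
        (fun f => Language.Structure.funMap (M := A.carrier) f)
        (fun _ _ => Classical.arbitrary A.carrier)
      RelMap := fun _ _ => False }

variable {σ}

theorem funMap_reduct_extend
    (hinj : ∀ n, Function.Injective fun f : L.Functions n => σ.onFunction f)
    (A : Alg L) {n : ℕ} (f : L.Functions n) (xs : Fin n → A.carrier) :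
    Language.Structure.funMap (M := ((A.extend σ).reduct σ).carrier) f xs =
      Language.Structure.funMap f xs :=
  congrFun ((hinj n).extend_apply _ _ f) xs

theorem realize_reduct_extend
    (hinj : ∀ n, Function.Injective fun f : L.Functions n => σ.onFunction f)
    (A : Alg L) (h : ℕ → A.carrier) (t : L.Term ℕ) :
    t.realize (M := ((A.extend σ).reduct σ).carrier) h = t.realize h := by
  induction t with
  | var x => rfl
  | func f ts ih =>
    exact (funMap_reduct_extend hinj A f _).trans (congrArg _ (funext ih))

theorem sat_reduct_extend_iff
    (hinj : ∀ n, Function.Injective fun f : L.Functions n => σ.onFunction f)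
    (A : Alg L) (ξ : CondEqn L) : ((A.extend σ).reduct σ).Sat ξ ↔ A.Sat ξ := by
  refine forall_congr' fun h => ?_
  simp only [SatEq, realize_reduct_extend hinj A h]
  rfl

variable (v : ℕ → ℕ)

theorem realize_mapTerm (A' : Alg L') (h' : ℕ → A'.carrier) (t : L.Term ℕ) :
    (mapTerm σ v t).realize h' = t.realize (M := (A'.reduct σ).carrier) (h' ∘ v) := by
  induction t with
  | var x => rfl
  | func f ts ih =>
    exact congrArg _ (funext ih)

theorem satEq_mapEq_iff (A' : Alg L') (h' : ℕ → A'.carrier) (e : Eqn L) :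
    A'.SatEq h' (mapEq σ v e) ↔ (A'.reduct σ).SatEq (h' ∘ v) e := by
  simp only [SatEq, mapEq, realize_mapTerm]
  rfl

variable {v}

theorem sat_mapCE_iff (hv : Function.Injective v) (A' : Alg L') (ξ : CondEqn L) :
    A'.Sat (mapCE σ v ξ) ↔ (A'.reduct σ).Sat ξ := by
  classical
  simp only [Sat, mapCE, Finset.forall_mem_image, satEq_mapEq_iff]
  refine ⟨fun hsat h => ?_, fun hsat h' => hsat (h' ∘ v)⟩
  obtain ⟨h', rfl⟩ := hv.surjective_comp_right (γ := A'.carrier) h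
  exact hsat h'

end Alg

theorem trCE_singleton_mapEq {L L' : Signature} (σ : L →ᴸ L') (v : ℕ → ℕ) (ξ : CondEqn L) :
    trCE (fun e => ({mapEq σ v e} : Finset (Eqn L'))) ξ = {mapCE σ v ξ} := by
  simp only [trCE, mapCE, Finset.biUnion_singleton, Finset.image_singleton]

theorem refines_of_reduct_mem {L L' : Signature} {σ : L →ᴸ L'} {v : ℕ → ℕ}
    (hv : Function.Injective v) {SP : Set (Alg L)} {SP' : Set (Alg L')}
    (href : ∀ A' ∈ SP', Alg.reduct σ A' ∈ SP) :
    Refines (fun e => ({mapEq σ v e} : Finset (Eqn L'))) SP SP' := by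
  intro ξ hξ η hη A' hA'
  rw [trCE_singleton_mapEq, Finset.mem_singleton] at hη
  subst hη
  exact (Alg.sat_mapCE_iff hv A' ξ).2 (hξ _ (href A' hA'))

theorem interpretsIn_image_extend {L L' : Signature} {σ : L →ᴸ L'} {v : ℕ → ℕ}
    (hv : Function.Injective v)
    (hinj : ∀ n, Function.Injective fun f : L.Functions n => σ.onFunction f)
    (SP : Set (Alg L)) :
    InterpretsIn (fun e => ({mapEq σ v e} : Finset (Eqn L'))) SP (Alg.extend σ '' SP) := by
  intro ξ
  simp only [trCE_singleton_mapEq, Finset.mem_singleton, forall_eq, ClassSat,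
    Set.forall_mem_image, Alg.sat_mapCE_iff hv, Alg.sat_reduct_extend_iff hinj]

theorem sigma_refinement_implies_refinement_by_interpretation_general {L L' : Signature}
    (σ : L →ᴸ L') (v : ℕ → ℕ) (hv : Function.Injective v)
    (hinj : ∀ n, Function.Injective fun f : L.Functions n => σ.onFunction f)
    (SP : Set (Alg L)) (SP' : Set (Alg L'))
    (href : ∀ A' ∈ SP', Alg.reduct σ A' ∈ SP) :
    Interprets (fun e => ({mapEq σ v e} : Finset (Eqn L'))) SP ∧
      Refines (fun e => ({mapEq σ v e} : Finset (Eqn L'))) SP SP' :=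
  ⟨⟨_, interpretsIn_image_extend hv hinj SP⟩, refines_of_reduct_mem hv href⟩

/-- for an injective signature morphism `σ` with induced translation `τ`,
`SP ⇝_σ SP'` implies `SP ⇀_τ SP'` (in particular `τ` interprets `SP`). -/
theorem sigma_refinement_implies_refinement_by_interpretation {L L' : Signature}
    (_hL : L.IsAlgebraic) (_hL' : L'.IsAlgebraic)
    (σ : L →ᴸ L') (v : ℕ → ℕ) (hv : Function.Injective v)
    (hinj : ∀ n, Function.Injective fun f : L.Functions n => σ.onFunction f)
    (SP : Set (Alg L)) (SP' : Set (Alg L'))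
    (href : ∀ A' ∈ SP', Alg.reduct σ A' ∈ SP) :
    Interprets (fun e => ({mapEq σ v e} : Finset (Eqn L'))) SP ∧
      Refines (fun e => ({mapEq σ v e} : Finset (Eqn L'))) SP SP' :=
  sigma_refinement_implies_refinement_by_interpretation_general σ v hv hinj SP SP' href
end

section
/- Let L, L', L'' be k-, l- and m-deductive systems over Σ, Σ', Σ'' respectively; let τ be a (k,l)-translation from Σ to Σ' that interprets L and ρ an (l,m)-translation from Σ' to Σ'' that interprets L'. Suppose L ⇀_τ L', L' ⇀_ρ L'', and ρ interprets the l-deductive system L^τ = ⊨_{Mod_τ(L)}. Then the composite translation ρ∘τ (defined by (ρ∘τ)(φ) = ⋃_{ψ ∈ τ(φ)} ρ(ψ)) interprets L, and L ⇀_{ρ∘τ} L''. -/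
open FirstOrder

/-- A `k`-formula over `L`: a `k`-tuple of terms with variables in `ℕ`. -/
abbrev KFm (L : Signature) (k : ℕ) : Type := Fin k → L.Term ℕ

/-- Application of a substitution (an endomorphism of the term algebra,
given by its action on variables) to a `k`-formula, componentwise. -/
def substK {L : Signature} {k : ℕ} (σ : ℕ → L.Term ℕ) (φ : KFm L k) : KFm L k :=
  fun i => (φ i).subst σ

/-- A `k`-dimensional deductive system over the signature `L`. -/
structure DedSys (L : Signature) (k : ℕ) : Type 1 where
  turn : Set (KFm L k) → KFm L k → Prop
  mem_turn : ∀ (Γ : Set (KFm L k)) (γ : KFm L k), γ ∈ Γ → turn Γ γ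
  cut : ∀ (Γ Δ : Set (KFm L k)) (φ : KFm L k),
    turn Γ φ → (∀ γ ∈ Γ, turn Δ γ) → turn Δ φ
  subst_invariant : ∀ (Γ : Set (KFm L k)) (φ : KFm L k) (σ : ℕ → L.Term ℕ),
    turn Γ φ → turn (substK σ '' Γ) (substK σ φ)

/-- The extension of a `(k,l)`-translation to sets of `k`-formulas. -/
def trSet {L L' : Signature} {k l : ℕ} (τ : KFm L k → Finset (KFm L' l))
    (Γ : Set (KFm L k)) : Set (KFm L' l) :=
  ⋃ φ ∈ Γ, ↑(τ φ)

/-- `τ` interprets the `k`-deductive system `D` in the `l`-deductive system `D'`. -/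
def DInterpretsIn {L L' : Signature} {k l : ℕ} (τ : KFm L k → Finset (KFm L' l))
    (D : DedSys L k) (D' : DedSys L' l) : Prop :=
  ∀ (Γ : Set (KFm L k)) (φ : KFm L k),
    D.turn Γ φ ↔ ∀ ψ ∈ τ φ, D'.turn (trSet τ Γ) ψ

/-- `τ` interprets the `k`-deductive system `D`. -/
def DInterprets {L L' : Signature} {k l : ℕ} (τ : KFm L k → Finset (KFm L' l))
    (D : DedSys L k) : Prop :=
  ∃ D' : DedSys L' l, DInterpretsIn τ D D'

/-- `D'` refines `D` via the translation `τ`. -/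
def DRefines {L L' : Signature} {k l : ℕ} (τ : KFm L k → Finset (KFm L' l))
    (D : DedSys L k) (D' : DedSys L' l) : Prop :=
  ∀ (Γ : Set (KFm L k)) (φ : KFm L k),
    D.turn Γ φ → ∀ ψ ∈ τ φ, D'.turn (trSet τ Γ) ψ

/-- The composite of two translations: `(ρ∘τ)(φ) = ⋃_{ψ ∈ τ(φ)} ρ(ψ)`. -/
noncomputable def trComp {L L' L'' : Signature} {k l m : ℕ}
    (τ : KFm L k → Finset (KFm L' l)) (ρ : KFm L' l → Finset (KFm L'' m))
    (φ : KFm L k) : Finset (KFm L'' m) :=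
  letI := Classical.decEq (KFm L'' m)
  (τ φ).biUnion ρ

/-- A `k`-structure over `L`: an algebra (with nonempty carrier in a fixed universe)
together with a filter of designated `k`-tuples. -/
structure KStr (L : Signature) (k : ℕ) : Type 1 where
  carrier : Type
  [str : L.Structure carrier]
  [nonempty : Nonempty carrier]
  filter : Set (Fin k → carrier)

attribute [instance] KStr.str KStr.nonempty

/-- An assignment satisfies a `k`-formula in a `k`-structure when the tuple of values
belongs to the filter. -/
def KStr.holds {L : Signature} {k : ℕ} (A : KStr L k) (h : ℕ → A.carrier)
    (φ : KFm L k) : Prop :=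
  (fun i => (φ i).realize h) ∈ A.filter

/-- Semantic consequence in a `k`-structure. -/
def KStr.Sat {L : Signature} {k : ℕ} (A : KStr L k) (Γ : Set (KFm L k))
    (φ : KFm L k) : Prop :=
  ∀ h : ℕ → A.carrier, (∀ ψ ∈ Γ, A.holds h ψ) → A.holds h φ

/-- A `k`-structure is a model of a `k`-deductive system. -/
def IsKModel {L : Signature} {k : ℕ} (D : DedSys L k) (A : KStr L k) : Prop :=
  ∀ (Γ : Set (KFm L k)) (φ : KFm L k), D.turn Γ φ → A.Sat Γ φ

/-- The class of all models of a `k`-deductive system. -/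
def KMod {L : Signature} {k : ℕ} (D : DedSys L k) : Set (KStr L k) :=
  {A | IsKModel D A}

/-- Semantic consequence over a class of `k`-structures. -/
def SemCons {L : Signature} {k : ℕ} (M : Set (KStr L k)) (Γ : Set (KFm L k))
    (φ : KFm L k) : Prop :=
  ∀ A ∈ M, A.Sat Γ φ

/-- An `l`-structure over `L'` is a `τ`-model of the `k`-deductive system `D`. -/
def IsTauKModel {L L' : Signature} {k l : ℕ} (τ : KFm L k → Finset (KFm L' l))
    (D : DedSys L k) (A : KStr L' l) : Prop :=
  ∀ (Γ : Set (KFm L k)) (φ : KFm L k),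
    D.turn Γ φ → ∀ ψ ∈ τ φ, A.Sat (trSet τ Γ) ψ

/-- The class of all `τ`-models of `D`. -/
def ModTauK {L L' : Signature} {k l : ℕ} (τ : KFm L k → Finset (KFm L' l))
    (D : DedSys L k) : Set (KStr L' l) :=
  {A | IsTauKModel τ D A}

/-- Equational consequence determined by a class of algebras, on `2`-formulas
`⟨t, t'⟩` read as equations `t ≈ t'`. -/
def EqCons {L : Signature} (K : Set (Alg L)) (Γ : Set (KFm L 2)) (e : KFm L 2) : Prop :=
  ∀ A ∈ K, ∀ h : ℕ → A.carrier,
    (∀ γ ∈ Γ, (γ 0).realize h = (γ 1).realize h) → (e 0).realize h = (e 1).realize h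

/-- `K` is a `τ`-algebraic semantics of the `k`-deductive system `D`:
`τ` interprets `D` in the equational consequence `⊨_K`. -/
def IsAlgSem {L L' : Signature} {k : ℕ} (τ : KFm L k → Finset (KFm L' 2))
    (D : DedSys L k) (K : Set (Alg L')) : Prop :=
  ∀ (Γ : Set (KFm L k)) (φ : KFm L k),
    D.turn Γ φ ↔ ∀ e ∈ τ φ, EqCons K (trSet τ Γ) e

/-- `K^τ_L`: the class of algebras `A` such that `⟨A, Δ_A⟩` (identity filter)
is a `τ`-model of `D`. -/
def KTau {L L' : Signature} {k : ℕ} (τ : KFm L k → Finset (KFm L' 2))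
    (D : DedSys L k) : Set (Alg L') :=
  {A | ∀ (Γ : Set (KFm L k)) (φ : KFm L k),
    D.turn Γ φ → ∀ e ∈ τ φ, EqCons {A} (trSet τ Γ) e}

/-- The theories of a `k`-deductive system: sets of `k`-formulas closed under
its consequence relation. -/
def Theories {L : Signature} {k : ℕ} (D : DedSys L k) : Set (Set (KFm L k)) :=
  {T | ∀ φ : KFm L k, D.turn T φ → φ ∈ T}

/-- The set of equational consequences of `Γ` over the class of algebras `K`. -/
def CnK {L : Signature} (K : Set (Alg L)) (Γ : Set (KFm L 2)) : Set (KFm L 2) :=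
  {e | EqCons K Γ e}

/-- The set of consequences of `Γ` in a deductive system. -/
def CnD {L : Signature} {k : ℕ} (D : DedSys L k) (Γ : Set (KFm L k)) : Set (KFm L k) :=
  {φ | D.turn Γ φ}

section Aux

open FirstOrder Language

/-- Term algebra structure on `L.Term ℕ`. -/
def termStr (L : Signature) : L.Structure (L.Term ℕ) where
  funMap := fun f ts => Term.func f ts
  RelMap := fun _ _ => False

lemma realize_eq_subst {L : Signature} (σ : ℕ → L.Term ℕ) (t : L.Term ℕ) :
    (letI := termStr L; Term.realize σ t) = t.subst σ := by
  letI := termStr L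
  induction t with
  | var => rfl
  | func f ts ih =>
    exact congrArg (Term.func f) (funext ih)

lemma subst_var {L : Signature} (t : L.Term ℕ) : t.subst Term.var = t := by
  induction t with
  | var => rfl
  | func f ts ih => exact congrArg (Term.func f) (funext ih)

lemma substK_var {L : Signature} {k : ℕ} (φ : KFm L k) : substK Term.var φ = φ := by
  funext i; exact subst_var (φ i)

lemma trSet_comp {L L' L'' : Signature} {k l m : ℕ}
    (τ : KFm L k → Finset (KFm L' l)) (ρ : KFm L' l → Finset (KFm L'' m))
    (Γ : Set (KFm L k)) : trSet (trComp τ ρ) Γ = trSet ρ (trSet τ Γ) := by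
  classical
  ext χ
  simp only [trSet, trComp, Set.mem_iUnion, Finset.mem_coe, Finset.mem_biUnion]
  tauto

lemma mem_trComp {L L' L'' : Signature} {k l m : ℕ}
    (τ : KFm L k → Finset (KFm L' l)) (ρ : KFm L' l → Finset (KFm L'' m))
    (φ : KFm L k) (χ : KFm L'' m) :
    χ ∈ trComp τ ρ φ ↔ ∃ ψ ∈ τ φ, χ ∈ ρ ψ := by
  classical
  simp [trComp]

/-- Key lemma: if `τ` interprets `D` in `D'`, then `τ` interprets `D` in the
semantic system over `ModTauK τ D`. -/
lemma interp_sem {L L' : Signature} {k l : ℕ} (τ : KFm L k → Finset (KFm L' l))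
    (D : DedSys L k) (D' : DedSys L' l) (hτ : DInterpretsIn τ D D') :
    ∀ (Γ : Set (KFm L k)) (φ : KFm L k),
      D.turn Γ φ ↔ ∀ ψ ∈ τ φ, SemCons (ModTauK τ D) (trSet τ Γ) ψ := by
  intro Γ φ
  constructor
  · intro h ψ hψ A hA
    exact hA Γ φ h ψ hψ
  · intro h
    -- Canonical term model
    letI := termStr L'
    haveI : Nonempty (L'.Term ℕ) := ⟨Term.var 0⟩
    set A : KStr L' l :=
      { carrier := L'.Term ℕ
        filter := {θ | D'.turn (trSet τ Γ) θ} } with hAdef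
    have holds_iff : ∀ (σ : ℕ → L'.Term ℕ) (θ : KFm L' l),
        A.holds σ θ ↔ D'.turn (trSet τ Γ) (substK σ θ) := by
      intro σ θ
      have : (fun i => Term.realize σ (θ i)) = substK σ θ := by
        funext i; exact realize_eq_subst σ (θ i)
      unfold KStr.holds
      rw [show (fun i => Term.realize σ (θ i)) = substK σ θ from this]
      rfl
    have hAmem : A ∈ ModTauK τ D := by
      intro Δ χ hΔχ ψ hψ σ hprem
      rw [holds_iff]
      have hD' : D'.turn (trSet τ Δ) ψ := (hτ Δ χ).mp hΔχ ψ hψ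
      have hsub := D'.subst_invariant _ _ σ hD'
      refine D'.cut _ _ _ hsub ?_
      rintro γ' ⟨γ, hγ, rfl⟩
      have := hprem γ hγ
      rwa [holds_iff] at this
    rw [hτ Γ φ]
    intro ψ hψ
    have hsat := h ψ hψ A hAmem
    have := hsat Term.var (by
      intro γ hγ
      rw [holds_iff, substK_var]
      exact D'.mem_turn _ _ hγ)
    rwa [holds_iff, substK_var] at this

end Aux

/-- vertical composition of refinements by interpretation for
deductive systems, provided `ρ` interprets `L^τ = ⊨_{Mod_τ(L)}`. -/
theorem vertical_composition_ded {L L' L'' : Signature}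
    (_hL : L.IsAlgebraic) (_hL' : L'.IsAlgebraic) (_hL'' : L''.IsAlgebraic)
    {k l m : ℕ} (τ : KFm L k → Finset (KFm L' l)) (ρ : KFm L' l → Finset (KFm L'' m))
    (D : DedSys L k) (D' : DedSys L' l) (D'' : DedSys L'' m)
    (hτ : DInterprets τ D) (hρ : DInterprets ρ D')
    (h1 : DRefines τ D D') (h2 : DRefines ρ D' D'')
    (h3 : ∃ M : DedSys L'' m, ∀ (Γ : Set (KFm L' l)) (ψ : KFm L' l),
      SemCons (ModTauK τ D) Γ ψ ↔ ∀ χ ∈ ρ ψ, M.turn (trSet ρ Γ) χ) :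
    DInterprets (trComp τ ρ) D ∧ DRefines (trComp τ ρ) D D'' := by
  obtain ⟨D₀, hD₀⟩ := hτ
  obtain ⟨M, hM⟩ := h3
  have key := interp_sem τ D D₀ hD₀
  constructor
  · refine ⟨M, ?_⟩
    intro Γ φ
    rw [key Γ φ]
    constructor
    · intro h χ hχ
      rw [mem_trComp] at hχ
      obtain ⟨ψ, hψ, hχ⟩ := hχ
      have := (hM (trSet τ Γ) ψ).mp (h ψ hψ) χ hχ
      rwa [trSet_comp]
    · intro h ψ hψ
      rw [hM (trSet τ Γ) ψ]
      intro χ hχ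
      rw [← trSet_comp]
      exact h χ ((mem_trComp τ ρ φ χ).mpr ⟨ψ, hψ, hχ⟩)
  · intro Γ φ hΓφ χ hχ
    rw [mem_trComp] at hχ
    obtain ⟨ψ, hψ, hχ⟩ := hχ
    rw [trSet_comp]
    exact h2 (trSet τ Γ) ψ (h1 Γ φ hΓφ ψ hψ) χ hχ
end
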